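/- (Zlotnik inequality) Let the function y satisfy y'(t) = g(y(t)) + b'(t) on [0,T] with y(0) = y⁰, where g ∈ C(ℝ) and y, b ∈ W^{1,1}(0,T). Assume g(+∞) = −∞ and that b(t₂) − b(t₁) ≤ N₀ + N₁(t₂ − t₁) for all 0 ≤ t₁ < t₂ ≤ T, with some constants N₀ ≥ 0 and N₁ ≥ 0. Then y(t) ≤ max{y⁰, ξ̄} + N₀ < ∞ on [0,T], where ξ̄ is any constant such that g(ξ) ≤ −N₁ for all ξ ≥ ξ̄. -/

import Mathlib

open MeasureTheory Real Set Filter Topology ENNReal NNReal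

noncomputable section

/-- Three dimensional space. -/
abbrev R3 := Fin 3 → ℝ

/-- Partial derivative of a scalar field. -/
def pd (i : Fin 3) (f : R3 → ℝ) (x : R3) : ℝ := fderiv ℝ f x (Pi.single i 1)

/-- Gradient of a scalar field. -/
def grad (f : R3 → ℝ) (x : R3) : R3 := fun i => pd i f x

/-- Divergence of a vector field. -/
def div3 (u : R3 → R3) (x : R3) : ℝ := ∑ i, pd i (fun y => u y i) x

/-- Curl of a vector field. -/
def curl3 (u : R3 → R3) (x : R3) : R3 :=
  ![pd 1 (fun y => u y 2) x - pd 2 (fun y => u y 1) x,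
    pd 2 (fun y => u y 0) x - pd 0 (fun y => u y 2) x,
    pd 0 (fun y => u y 1) x - pd 1 (fun y => u y 0) x]

/-- Laplacian of a scalar field. -/
def lap (f : R3 → ℝ) (x : R3) : ℝ := ∑ i, pd i (pd i f) x

/-- (componentwise) Laplacian of a vector field. -/
def lapV (u : R3 → R3) (x : R3) : R3 := fun i => lap (fun y => u y i) x

/-- Squared Euclidean norm of a vector. -/
def nsq (v : R3) : ℝ := ∑ i, (v i) ^ 2

/-- Euclidean norm of a vector. -/
def vnorm (v : R3) : ℝ := Real.sqrt (nsq v)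

/-- Squared Frobenius norm of the gradient of a vector field. -/
def gradsq (u : R3 → R3) (x : R3) : ℝ := ∑ i, ∑ j, (pd j (fun y => u y i) x) ^ 2

/-- Time derivative. -/
def dt {E : Type*} [NormedAddCommGroup E] [NormedSpace ℝ E]
    (f : ℝ → R3 → E) (t : ℝ) (x : R3) : E := deriv (fun s => f s x) t

/-- Convective derivative `(u · ∇) f` of a vector field. -/
def conv (u : R3 → R3) (f : R3 → R3) (x : R3) : R3 :=
  fun i => ∑ j, u x j * pd j (fun y => f y i) x

/-- Material derivative `ḟ = f_t + u · ∇ f` of a time dependent vector field. -/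
def matD (u f : ℝ → R3 → R3) (t : ℝ) (x : R3) : R3 := dt f t x + conv (u t) (f t) x

/-- `L^p` norm (as a real number). -/
def LpN {E : Type*} [NormedAddCommGroup E] (p : ℝ≥0∞) (f : R3 → E) : ℝ :=
  (eLpNorm f p volume).toReal

/-- `L^p` norm of the gradient of a vector field. -/
def GradN (p : ℝ≥0∞) (u : R3 → R3) : ℝ := LpN p (fun x => fderiv ℝ u x)

/-- `L^p` norm of the gradient of a scalar field. -/
def GradSN (p : ℝ≥0∞) (f : R3 → ℝ) : ℝ := LpN p (grad f)

/-- `H¹` norm of a vector field. -/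
def H1N (u : R3 → R3) : ℝ := Real.sqrt ((LpN 2 u) ^ 2 + (GradN 2 u) ^ 2)

/-- `H¹` norm of a scalar field. -/
def H1SN (f : R3 → ℝ) : ℝ := Real.sqrt ((LpN 2 f) ^ 2 + (GradSN 2 f) ^ 2)

/-- `H²` norm of a scalar field. -/
def H2SN (f : R3 → ℝ) : ℝ :=
  Real.sqrt (∑ i ∈ Finset.range 3, (LpN 2 (iteratedFDeriv ℝ i f)) ^ 2)

/-- `H¹` norm of the gradient of a vector field, i.e. `‖∇u‖_{H¹}`. -/
def GradH1N (u : R3 → R3) : ℝ :=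
  Real.sqrt ((GradN 2 u) ^ 2 + (LpN 2 (iteratedFDeriv ℝ 2 u)) ^ 2)

/-- `H²` norm of the gradient of a vector field, i.e. `‖∇u‖_{H²}`. -/
def GradH2N (u : R3 → R3) : ℝ :=
  Real.sqrt ((GradN 2 u) ^ 2 + (LpN 2 (iteratedFDeriv ℝ 2 u)) ^ 2
    + (LpN 2 (iteratedFDeriv ℝ 3 u)) ^ 2)

/-- `H¹` norm of `∇²u`, i.e. `‖∇²u‖_{H¹}`. -/
def Hess1N (u : R3 → R3) : ℝ :=
  Real.sqrt ((LpN 2 (iteratedFDeriv ℝ 2 u)) ^ 2 + (LpN 2 (iteratedFDeriv ℝ 3 u)) ^ 2)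

/-- `W^{1,q}` norm of `∇f` for a scalar field `f`, i.e. `‖∇f‖_{W^{1,q}}`. -/
def GradW1qSN (q : ℝ≥0∞) (f : R3 → ℝ) : ℝ :=
  LpN q (grad f) + LpN q (iteratedFDeriv ℝ 2 f)

/-- `W^{1,q}` norm of `∇²u` for a vector field `u`, i.e. `‖∇²u‖_{W^{1,q}}`. -/
def HessW1qN (q : ℝ≥0∞) (u : R3 → R3) : ℝ :=
  LpN q (iteratedFDeriv ℝ 2 u) + LpN q (iteratedFDeriv ℝ 3 u)

/-- Membership in the Sobolev space `W^{k,p}` for scalar fields. -/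
def MemSob (k : ℕ) (p : ℝ≥0∞) (f : R3 → ℝ) : Prop :=
  ∀ i ≤ k, MemLp (iteratedFDeriv ℝ i f) p volume

/-- Potential energy density `G(ρ) = ρ ∫₁^ρ (P(s) - P(1))/s² ds` with `P(s) = s^γ`. -/
def Gpot (γ : ℝ) (r : ℝ) : ℝ := r * ∫ s in (1:ℝ)..r, (s ^ γ - 1) / s ^ 2

/-- Initial energy. -/
def E0 (γ : ℝ) (ρ0 : R3 → ℝ) (u0 w0 : R3 → R3) : ℝ :=
  ∫ x, (ρ0 x * nsq (u0 x) / 2 + ρ0 x * nsq (w0 x) / 2 + Gpot γ (ρ0 x))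

/-- `σ(t) = min{1, t}`. -/
def sg (t : ℝ) : ℝ := min 1 t

/-- The quantity `A₁(T)`. -/
def A1 (ρ : ℝ → R3 → ℝ) (u w : ℝ → R3 → R3) (T : ℝ) : ℝ :=
  (⨆ t : Icc (0:ℝ) T, sg t * (GradN 2 (u t) ^ 2 + GradN 2 (w t) ^ 2)) +
  ∫ t in (0:ℝ)..T, sg t *
    ∫ x, (ρ t x * nsq (matD u u t x) + ρ t x * nsq (matD u w t x))

/-- The quantity `A₂(T)`. -/
def A2 (ρ : ℝ → R3 → ℝ) (u w : ℝ → R3 → R3) (T : ℝ) : ℝ :=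
  (⨆ t : Icc (0:ℝ) T, sg t ^ 3 *
    ∫ x, (ρ t x * nsq (matD u u t x) + ρ t x * nsq (matD u w t x))) +
  ∫ t in (0:ℝ)..T, sg t ^ 3 *
    ((LpN 2 fun x => fderiv ℝ (matD u u t) x) ^ 2 +
     (LpN 2 fun x => fderiv ℝ (matD u w t) x) ^ 2)

/-- The quantity `A₃(T)`. -/
def A3 (ρ : ℝ → R3 → ℝ) (u : ℝ → R3 → R3) (T : ℝ) : ℝ :=
  ⨆ t : Icc (0:ℝ) T, ∫ x, ρ t x * vnorm (u t x) ^ 3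

/-- Effective viscous flux `F₁ = (2μ+λ) div u - (P(ρ) - P(ρ̃))`. -/
def F1 (μ lam γ ρinf : ℝ) (ρ : ℝ → R3 → ℝ) (u : ℝ → R3 → R3) (t : ℝ) (x : R3) : ℝ :=
  (2 * μ + lam) * div3 (u t) x - (ρ t x ^ γ - ρinf ^ γ)

/-- `F₂ = (2μ'+λ') div w`. -/
def F2 (μ' lam' : ℝ) (w : ℝ → R3 → R3) (t : ℝ) (x : R3) : ℝ :=
  (2 * μ' + lam') * div3 (w t) x

/-- Restrictions on the viscosity coefficients and the adiabatic exponent. -/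
structure ParamsOK (μ lam ζ μ' lam' γ : ℝ) : Prop where
  μ_pos : 0 < μ
  lam_pos : 0 < lam
  ζ_pos : 0 < ζ
  μ'_pos : 0 < μ'
  lam'_pos : 0 < lam'
  γ_gt : 1 < γ
  phys1 : 0 ≤ 2 * μ + 3 * lam - 4 * ζ
  phys2 : 0 ≤ 2 * μ' + 3 * lam'

/-- `(ρ, u, w)` is a smooth solution of the compressible micropolar system (1.1)
on `ℝ³ × (0, T]` with far field `(ρ̃, 0, 0)`. -/
structure IsSol (μ lam ζ μ' lam' γ ρinf : ℝ)
    (ρ : ℝ → R3 → ℝ) (u w : ℝ → R3 → R3) (T : ℝ) : Prop where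
  smooth : ∀ n : ℕ, ContDiffOn ℝ n
    (fun pr : ℝ × R3 => (ρ pr.1 pr.2, u pr.1 pr.2, w pr.1 pr.2)) (Ioc 0 T ×ˢ univ)
  mass : ∀ t ∈ Ioc (0:ℝ) T, ∀ x,
    dt ρ t x + div3 (fun y => ρ t y • u t y) x = 0
  mom : ∀ t ∈ Ioc (0:ℝ) T, ∀ x, ∀ i,
    dt (fun s y => ρ s y * u s y i) t x
      + div3 (fun y => (ρ t y * u t y i) • u t y) x
      + pd i (fun y => ρ t y ^ γ) x
    = (μ + ζ) * lapV (u t) x i + (μ + lam - ζ) * grad (div3 (u t)) x i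
      + 2 * ζ * curl3 (w t) x i
  ang : ∀ t ∈ Ioc (0:ℝ) T, ∀ x, ∀ i,
    dt (fun s y => ρ s y * w s y i) t x
      + div3 (fun y => (ρ t y * w t y i) • u t y) x
      + 4 * ζ * w t x i
    = μ' * lapV (w t) x i + (μ' + lam') * grad (div3 (w t)) x i
      + 2 * ζ * curl3 (u t) x i
  farfield : ∀ t ∈ Ioc (0:ℝ) T, Tendsto (fun x : R3 => (ρ t x, u t x, w t x))
    (cocompact R3) (𝓝 (ρinf, 0, 0))

/-- A smooth solution on `ℝ³ × (0,T]` attaining the initial data `(ρ₀, u₀, w₀)`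
continuously at `t = 0`. -/
structure IsSolFrom (μ lam ζ μ' lam' γ ρinf : ℝ)
    (ρ0 : R3 → ℝ) (u0 w0 : R3 → R3)
    (ρ : ℝ → R3 → ℝ) (u w : ℝ → R3 → R3) (T : ℝ)
    extends IsSol μ lam ζ μ' lam' γ ρinf ρ u w T : Prop where
  init_ρ : ρ 0 = ρ0
  init_u : u 0 = u0
  init_w : w 0 = w0
  cont0 : ContinuousOn
    (fun pr : ℝ × R3 => (ρ pr.1 pr.2, u pr.1 pr.2, w pr.1 pr.2)) (Icc 0 T ×ˢ univ)

/-- Conditions (1.4)–(1.5) of Theorem 1.1 on the initial data. -/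
structure InitOK (μ lam ζ μ' lam' γ ρinf ρbar M q : ℝ)
    (ρ0 : R3 → ℝ) (u0 w0 : R3 → R3) : Prop where
  integ : Integrable (fun x =>
    Gpot γ (ρ0 x) + ρ0 x * nsq (u0 x) + ρ0 x * nsq (w0 x)) volume
  ρ0_nonneg : ∀ x, 0 ≤ ρ0 x
  ρ0_le : ∀ x, ρ0 x ≤ ρbar
  reg_ρ2 : MemSob 2 2 fun x => ρ0 x - ρinf
  reg_ρq : MemSob 2 (ENNReal.ofReal q) fun x => ρ0 x - ρinf
  reg_P2 : MemSob 2 2 fun x => ρ0 x ^ γ - ρinf ^ γ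
  reg_Pq : MemSob 2 (ENNReal.ofReal q) fun x => ρ0 x ^ γ - ρinf ^ γ
  reg_u0 : MemLp u0 6 volume ∧ MemLp (fun x => fderiv ℝ u0 x) 2 volume ∧
    MemLp (iteratedFDeriv ℝ 2 u0) 2 volume
  reg_w0 : MemLp w0 6 volume ∧ MemLp (fun x => fderiv ℝ w0 x) 2 volume ∧
    MemLp (iteratedFDeriv ℝ 2 w0) 2 volume
  h1_bdd : H1N u0 + H1N w0 ≤ M
  compat : ∃ g1 g2 : R3 → R3, MemLp g1 2 volume ∧ MemLp g2 2 volume ∧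
    (∀ x i, -(μ + ζ) * lapV u0 x i - (μ + lam - ζ) * grad (div3 u0) x i
      - 2 * ζ * curl3 w0 x i + pd i (fun y => ρ0 y ^ γ) x
      = Real.sqrt (ρ0 x) * g1 x i) ∧
    (∀ x i, -μ' * lapV w0 x i - (μ' + lam') * grad (div3 w0) x i
      - 2 * ζ * curl3 u0 x i + 4 * ζ * w0 x i
      = Real.sqrt (ρ0 x) * g2 x i)

/-- Condition (3.1). -/
def Cond31 (γ ρbar : ℝ) (ρ0 : R3 → ℝ) (u0 w0 : R3 → R3)
    (ρ : ℝ → R3 → ℝ) (u w : ℝ → R3 → R3) (T : ℝ) : Prop :=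
  (∀ t ∈ Ioc (0:ℝ) T, ∀ x, ρ t x ≤ 2 * ρbar) ∧
  A1 ρ u w T + A2 ρ u w T ≤ 2 * E0 γ ρ0 u0 w0 ^ ((1:ℝ)/2) ∧
  A3 ρ u (sg T) ≤ 2 * E0 γ ρ0 u0 w0 ^ ((1:ℝ)/4)

/-- Continuity of `t ↦ f t` from `S ⊆ ℝ` into `L^p(ℝ³)`. -/
def ContInLp {E : Type*} [NormedAddCommGroup E] (S : Set ℝ) (p : ℝ≥0∞)
    (f : ℝ → R3 → E) : Prop :=
  (∀ t ∈ S, MemLp (f t) p volume) ∧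
  ∀ t ∈ S, Tendsto (fun s => eLpNorm (fun x => f s x - f t x) p volume)
    (𝓝[S] t) (𝓝 0)

/-- `h ∈ C([0,T]; H² ∩ W^{2,q})` for a scalar field. -/
def ContH2W2q (T : ℝ) (q : ℝ≥0∞) (h : ℝ → R3 → ℝ) : Prop :=
  ∀ i : ℕ, i ≤ 2 → ContInLp (Icc 0 T) 2 (fun t => iteratedFDeriv ℝ i (h t)) ∧
    ContInLp (Icc 0 T) q (fun t => iteratedFDeriv ℝ i (h t))

/-- `v ∈ C([0,T]; D¹ ∩ D²)` for a vector field. -/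
def ContD1D2 (T : ℝ) (v : ℝ → R3 → R3) : Prop :=
  ContInLp (Icc 0 T) 6 v ∧
  ContInLp (Icc 0 T) 2 (fun t x => fderiv ℝ (v t) x) ∧
  ContInLp (Icc 0 T) 2 (fun t => iteratedFDeriv ℝ 2 (v t))

/-- `v ∈ L^∞([τ,T]; D² ∩ D^{3,q})`. -/
def LinfD2D3q (τ T : ℝ) (q : ℝ≥0∞) (v : ℝ → R3 → R3) : Prop :=
  ∃ C : ℝ≥0, ∀ t ∈ Icc τ T,
    eLpNorm (iteratedFDeriv ℝ 2 (v t)) 2 volume ≤ C ∧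
    eLpNorm (iteratedFDeriv ℝ 3 (v t)) q volume ≤ C

/-- `v ∈ L^∞([τ,T]; D¹ ∩ D²)`. -/
def LinfD1D2 (τ T : ℝ) (v : ℝ → R3 → R3) : Prop :=
  ∃ C : ℝ≥0, ∀ t ∈ Icc τ T,
    eLpNorm (v t) 6 volume ≤ C ∧
    eLpNorm (fun x => fderiv ℝ (v t) x) 2 volume ≤ C ∧
    eLpNorm (iteratedFDeriv ℝ 2 (v t)) 2 volume ≤ C

/-- `v ∈ H¹([τ,T]; D¹)`. -/
def H1tD1 (τ T : ℝ) (v : ℝ → R3 → R3) : Prop :=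
  (∫⁻ t in Icc τ T, (eLpNorm (fun x => fderiv ℝ (v t) x) 2 volume) ^ 2) < ⊤ ∧
  (∫⁻ t in Icc τ T, (eLpNorm (fun x => fderiv ℝ (dt v t) x) 2 volume) ^ 2) < ⊤

/-- The regularity class (1.7) on the time interval `[0, T]`. -/
def RegClassOn (T : ℝ) (q : ℝ≥0∞) (γ ρinf : ℝ)
    (ρ : ℝ → R3 → ℝ) (u w : ℝ → R3 → R3) : Prop :=
  ContH2W2q T q (fun t x => ρ t x - ρinf) ∧
  ContH2W2q T q (fun t x => ρ t x ^ γ - ρinf ^ γ) ∧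
  ContD1D2 T u ∧ ContD1D2 T w ∧
  ∀ τ : ℝ, 0 < τ → τ < T →
    LinfD2D3q τ T q u ∧ LinfD2D3q τ T q w ∧
    LinfD1D2 τ T (dt u) ∧ LinfD1D2 τ T (dt w) ∧
    H1tD1 τ T (dt u) ∧ H1tD1 τ T (dt w)

/-- The full regularity class (1.7) of a global classical solution. -/
def RegClass (q : ℝ≥0∞) (γ ρinf : ℝ) (ρ : ℝ → R3 → ℝ) (u w : ℝ → R3 → R3) : Prop :=
  ∀ T > (0:ℝ), RegClassOn T q γ ρinf ρ u w

end

/-! If `y t > M := max y⁰ ξ`, let `t₀` be the last time before `t` with `y t₀ ≤ M`. On `(t₀, t]`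
we have `y > ξ`, so `(y - b)' = g y ≤ -N₁` there, and the mean value theorem gives
`y t - y t₀ ≤ b t - b t₀ - N₁ (t - t₀) ≤ N₀`. -/

theorem ContinuousOn.exists_forall_Ioc_lt {f : ℝ → ℝ} {a b M : ℝ} (hab : a ≤ b)
    (hf : ContinuousOn f (Icc a b)) (ha : f a ≤ M) :
    ∃ c ∈ Icc a b, f c ≤ M ∧ ∀ s ∈ Ioc c b, M < f s := by
  have hcompact : IsCompact (Icc a b ∩ f ⁻¹' Iic M) :=
    isCompact_Icc.of_isClosed_subset
      (hf.preimage_isClosed_of_isClosed isClosed_Icc isClosed_Iic) inter_subset_left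
  obtain ⟨c, ⟨hc, hfc⟩, hmax⟩ := hcompact.exists_isGreatest ⟨a, left_mem_Icc.2 hab, ha⟩
  refine ⟨c, hc, hfc, fun s hs => lt_of_not_ge fun hfs => ?_⟩
  exact hs.1.not_ge (hmax ⟨⟨hc.1.trans hs.1.le, hs.2⟩, hfs⟩)

theorem sub_le_mul_sub_of_hasDerivAt_le {f f' : ℝ → ℝ} {a b C : ℝ} (hab : a ≤ b)
    (hf : ∀ x ∈ Icc a b, HasDerivAt f (f' x) x) (hle : ∀ x ∈ Ioo a b, f' x ≤ C) :
    f b - f a ≤ C * (b - a) := by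
  refine (convex_Icc a b).image_sub_le_mul_sub_of_deriv_le
    (fun x hx => (hf x hx).continuousAt.continuousWithinAt) ?_ ?_
    a (left_mem_Icc.2 hab) b (right_mem_Icc.2 hab) hab
  all_goals rw [interior_Icc]
  · exact fun x hx => (hf x (Ioo_subset_Icc_self hx)).differentiableAt.differentiableWithinAt
  · exact fun x hx => (hf x (Ioo_subset_Icc_self hx)).deriv ▸ hle x hx

theorem zlotnik_inequality_general (T : ℝ) (g : ℝ → ℝ) (y b db : ℝ → ℝ)
    (hy : ∀ t ∈ Set.Icc (0:ℝ) T, HasDerivAt y (g (y t) + db t) t)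
    (hb : ∀ t ∈ Set.Icc (0:ℝ) T, HasDerivAt b (db t) t)
    (N0 N1 : ℝ) (hN0 : 0 ≤ N0)
    (hbd : ∀ t1 t2 : ℝ, 0 ≤ t1 → t1 < t2 → t2 ≤ T →
      b t2 - b t1 ≤ N0 + N1 * (t2 - t1))
    (ξ : ℝ) (hξ : ∀ x, ξ ≤ x → g x ≤ -N1) :
    ∀ t ∈ Set.Icc (0:ℝ) T, y t ≤ max (y 0) ξ + N0 := by
  intro t ⟨ht0, htT⟩
  have hycont : ContinuousOn y (Icc 0 t) := fun s hs =>
    (hy s (Icc_subset_Icc_right htT hs)).continuousAt.continuousWithinAt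
  obtain ⟨t₀, ⟨ht₀, ht₀t⟩, hyt₀, hyM⟩ := hycont.exists_forall_Ioc_lt ht0 (le_max_left _ _)
  rcases ht₀t.eq_or_lt with rfl | hlt
  · linarith
  have hsub : Icc t₀ t ⊆ Icc 0 T := Icc_subset_Icc ht₀ htT
  have hdecay : (y t - b t) - (y t₀ - b t₀) ≤ -N1 * (t - t₀) := by
    refine sub_le_mul_sub_of_hasDerivAt_le (f := fun s => y s - b s) hlt.le
      (fun s hs => (hy s (hsub hs)).sub (hb s (hsub hs))) fun s hs => ?_
    rw [add_sub_cancel_right]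
    exact hξ _ ((le_max_right _ _).trans (hyM s (Ioo_subset_Ioc_self hs)).le)
  linarith [hbd t₀ t ht₀ hlt htT]

/-- Lemma 2.3 (Zlotnik inequality). -/
theorem zlotnik_inequality (T : ℝ) (hT : 0 < T) (g : ℝ → ℝ) (y b db : ℝ → ℝ)
    (hg : Continuous g)
    (hy : ∀ t ∈ Set.Icc (0:ℝ) T, HasDerivAt y (g (y t) + db t) t)
    (hb : ∀ t ∈ Set.Icc (0:ℝ) T, HasDerivAt b (db t) t)
    (hginf : Filter.Tendsto g Filter.atTop Filter.atBot)
    (N0 N1 : ℝ) (hN0 : 0 ≤ N0) (hN1 : 0 ≤ N1)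
    (hbd : ∀ t1 t2 : ℝ, 0 ≤ t1 → t1 < t2 → t2 ≤ T →
      b t2 - b t1 ≤ N0 + N1 * (t2 - t1))
    (ξ : ℝ) (hξ : ∀ x, ξ ≤ x → g x ≤ -N1) :
    ∀ t ∈ Set.Icc (0:ℝ) T, y t ≤ max (y 0) ξ + N0 :=
  zlotnik_inequality_general T g y b db hy hb N0 N1 hN0 hbd ξ hξ
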